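/- Let 𝒢 be a minimum-cardinality family of flats witnessing that a point set has essential dimension at most k while covering a maximum number of points. Then for any subfamily 𝒜 ⊆ 𝒢 with |𝒜| ≥ 2 and any flat Λ, the sum over Γ ∈ 𝒜 of dim(Γ ∩ Λ) is strictly less than dim(Λ). -/

import Mathlib

open scoped Classical

noncomputable def adim {K V : Type*} [Field K] [AddCommGroup V] [Module K V]
    (s : AffineSubspace K V) : ℤ :=
  if s = ⊥ then -1 else (Module.finrank K s.direction : ℤ)

/-- `Q` spans the flat `Γ` of dimension `k`: `Γ` is the affine span of `Q ∩ Γ`. -/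
def Spans {K V : Type*} [Field K] [AddCommGroup V] [Module K V]
    (Q : Set V) (k : ℤ) (Γ : AffineSubspace K V) : Prop :=
  adim Γ = k ∧ affineSpan K (Q ∩ ↑Γ) = Γ

/-- the number of `k`-flats spanned by `Q` (for `k = -1` this counts the empty flat). -/
noncomputable def nFlats (K : Type*) {V : Type*} [Field K] [AddCommGroup V] [Module K V]
    (Q : Set V) (k : ℤ) : ℕ :=
  Nat.card {Γ : AffineSubspace K V // Spans Q k Γ}

/-- the essential dimension of `Q` is at most `t`. -/
def EssDimLE (K : Type*) {V : Type*} [Field K] [AddCommGroup V] [Module K V]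
    (Q : Set V) (t : ℤ) : Prop :=
  ∃ G : Finset (AffineSubspace K V), (∀ Γ ∈ G, 1 ≤ adim Γ) ∧
    (∀ q ∈ Q, ∃ Γ ∈ G, q ∈ Γ) ∧ ∑ Γ ∈ G, adim Γ ≤ t

/-- `g_m(P)`: the maximum size of a subset of `P` of essential dimension at most `m`. -/
noncomputable def gdim (K : Type*) {V : Type*} [Field K] [AddCommGroup V] [Module K V]
    (P : Finset V) (m : ℤ) : ℕ :=
  sSup {c : ℕ | ∃ P' ⊆ P, EssDimLE K (P' : Set V) m ∧ P'.card = c}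

/-!
Suppose `∑_{Γ ∈ 𝒜} dim (Γ ∩ Λ) ≥ dim Λ`. Replace the flats of `𝒜` by the single flat
`Λ' = Λ ∨ ⋁ 𝒜`. Iterating the dimension formula `dim (A ∨ B) ≤ dim A + dim B - dim (A ∩ B)`
(which holds also when `A ∩ B = ∅`, thanks to the convention `dim ∅ = -1`) gives
`dim Λ' ≤ dim Λ + ∑_{Γ ∈ 𝒜} (dim Γ - dim (Γ ∩ Λ)) ≤ ∑_{Γ ∈ 𝒜} dim Γ`. So the new family still
has total dimension at most `k` and covers every point the old one covered, while having
fewer members since `|𝒜| ≥ 2`; this contradicts the minimality of `G`.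
-/

section AffineDimension

open AffineSubspace

variable {K V : Type*} [Field K] [AddCommGroup V] [Module K V]

lemma adim_bot : adim (⊥ : AffineSubspace K V) = -1 := if_pos rfl

lemma adim_of_ne_bot {s : AffineSubspace K V} (hs : s ≠ ⊥) :
    adim s = Module.finrank K s.direction := if_neg hs

lemma neg_one_le_adim (s : AffineSubspace K V) : -1 ≤ adim s := by
  by_cases hs : s = ⊥
  · rw [hs, adim_bot]
  · rw [adim_of_ne_bot hs]; omega

variable [FiniteDimensional K V]

lemma adim_mono {A B : AffineSubspace K V} (h : A ≤ B) : adim A ≤ adim B := by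
  by_cases hA : A = ⊥
  · rw [hA, adim_bot]; exact neg_one_le_adim B
  have hB : B ≠ ⊥ := fun hB => hA (le_bot_iff.mp (hB ▸ h))
  rw [adim_of_ne_bot hA, adim_of_ne_bot hB]
  exact_mod_cast Submodule.finrank_mono (direction_le h)

lemma adim_sup_add_adim_inf_of_inf_ne_bot {A B : AffineSubspace K V} (hAB : A ⊓ B ≠ ⊥) :
    adim (A ⊔ B) + adim (A ⊓ B) = adim A + adim B := by
  obtain ⟨p, hpA, hpB⟩ := (nonempty_iff_ne_bot (A ⊓ B)).2 hAB
  have hA : A ≠ ⊥ := (nonempty_iff_ne_bot A).1 ⟨p, hpA⟩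
  have hB : B ≠ ⊥ := (nonempty_iff_ne_bot B).1 ⟨p, hpB⟩
  have hsup : A ⊔ B ≠ ⊥ := fun h => hA (le_bot_iff.mp (h ▸ le_sup_left))
  have hdir_sup : (A ⊔ B).direction = A.direction ⊔ B.direction := by
    rw [direction_sup hpA hpB, vsub_self, Submodule.span_zero_singleton, sup_bot_eq]
  rw [adim_of_ne_bot hA, adim_of_ne_bot hB, adim_of_ne_bot hsup, adim_of_ne_bot hAB, hdir_sup,
    direction_inf_of_mem hpA hpB]
  exact_mod_cast Submodule.finrank_sup_add_finrank_inf_eq A.direction B.direction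

lemma adim_sup_le_add_add_one {A B : AffineSubspace K V} (hA : A ≠ ⊥) (hB : B ≠ ⊥) :
    adim (A ⊔ B) ≤ adim A + adim B + 1 := by
  obtain ⟨p, hp⟩ := (nonempty_iff_ne_bot A).2 hA
  obtain ⟨q, hq⟩ := (nonempty_iff_ne_bot B).2 hB
  have hsup : A ⊔ B ≠ ⊥ := fun h => hA (le_bot_iff.mp (h ▸ le_sup_left))
  have hline : Module.finrank K (K ∙ (q -ᵥ p)) ≤ 1 := by
    simpa using finrank_span_le_card (R := K) ({q -ᵥ p} : Set V)
  have hdir := Submodule.finrank_add_le_finrank_add_finrank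
    (A.direction ⊔ B.direction) (K ∙ (q -ᵥ p))
  have hdir' := Submodule.finrank_add_le_finrank_add_finrank A.direction B.direction
  rw [adim_of_ne_bot hA, adim_of_ne_bot hB, adim_of_ne_bot hsup, direction_sup hp hq]
  omega

lemma adim_sup_le (A B : AffineSubspace K V) :
    adim (A ⊔ B) ≤ adim A + adim B - adim (A ⊓ B) := by
  by_cases hA : A = ⊥
  · rw [hA, bot_sup_eq, bot_inf_eq, adim_bot]; omega
  by_cases hB : B = ⊥
  · rw [hB, sup_bot_eq, inf_bot_eq, adim_bot]; omega
  by_cases hAB : A ⊓ B = ⊥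
  · rw [hAB, adim_bot]
    linarith [adim_sup_le_add_add_one hA hB]
  · linarith [adim_sup_add_adim_inf_of_inf_ne_bot hAB]

lemma adim_sup_finset_sup_le (Λ : AffineSubspace K V) (𝒜 : Finset (AffineSubspace K V)) :
    adim (Λ ⊔ 𝒜.sup id) ≤ adim Λ + ∑ Γ ∈ 𝒜, (adim Γ - adim (Γ ⊓ Λ)) := by
  induction 𝒜 using Finset.induction with
  | empty => simp
  | @insert Γ 𝒜 hΓ ih =>
    have hjoin : Λ ⊔ (insert Γ 𝒜).sup id = (Λ ⊔ 𝒜.sup id) ⊔ Γ := by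
      rw [Finset.sup_insert, id_eq, sup_comm Γ, ← sup_assoc]
    have hmeet : adim (Γ ⊓ Λ) ≤ adim ((Λ ⊔ 𝒜.sup id) ⊓ Γ) :=
      adim_mono (le_inf (inf_le_right.trans le_sup_left) inf_le_left)
    rw [hjoin, Finset.sum_insert hΓ]
    linarith [adim_sup_le (Λ ⊔ 𝒜.sup id) Γ]

end AffineDimension

lemma card_le_gdim {K V : Type*} [Field K] [AddCommGroup V] [Module K V] {P P' : Finset V}
    {m : ℤ} (hP' : P' ⊆ P) (h : EssDimLE K (P' : Set V) m) : P'.card ≤ gdim K P m :=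
  le_csSup ⟨P.card, fun _ ⟨_, hQ, _, hc⟩ => hc ▸ Finset.card_le_card hQ⟩ ⟨P', hP', h, rfl⟩

lemma Finset.sum_insert_sdiff_le {α : Type*} {f : α → ℤ} {s t : Finset α} (hts : t ⊆ s)
    {a : α} (ha : 0 ≤ f a) : ∑ x ∈ insert a (s \ t), f x ≤ f a + ∑ x ∈ s, f x - ∑ x ∈ t, f x := by
  rw [← Finset.sum_sdiff hts]
  by_cases has : a ∈ s \ t
  · rw [Finset.insert_eq_of_mem has]; omega
  · rw [Finset.sum_insert has]; omega

/-- If `G = 𝒢_k(P)` is a minimum-cardinality family of flats of dimension ≥ 1 of total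
dimension at most `k` covering a maximum-cardinality subset of `P` of essential dimension at
most `k`, then for any subfamily `𝒜 ⊆ G` with `|𝒜| ≥ 2` and any flat `Λ`,
`∑_{Γ ∈ 𝒜} dim (Γ ∩ Λ) < dim Λ`. -/
theorem stmt_8 {K V : Type*} [Field K] [AddCommGroup V] [Module K V] [FiniteDimensional K V]
    (P : Finset V) (k : ℤ)
    (G : Finset (AffineSubspace K V))
    (hG1 : ∀ Γ ∈ G, 1 ≤ adim Γ)
    (hGsum : ∑ Γ ∈ G, adim Γ ≤ k)
    (hGcov : (P.filter (fun p => ∃ Γ ∈ G, p ∈ Γ)).card = gdim K P k)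
    (hGmin : ∀ G' : Finset (AffineSubspace K V), (∀ Γ ∈ G', 1 ≤ adim Γ) →
      ∑ Γ ∈ G', adim Γ ≤ k → (P.filter (fun p => ∃ Γ ∈ G', p ∈ Γ)).card = gdim K P k →
      G.card ≤ G'.card)
    (𝒜 : Finset (AffineSubspace K V)) (h𝒜 : 𝒜 ⊆ G) (h𝒜2 : 2 ≤ 𝒜.card)
    (Λ : AffineSubspace K V) :
    ∑ Γ ∈ 𝒜, adim (Γ ⊓ Λ) < adim Λ := by
  by_contra! hcon
  obtain ⟨Γ₀, hΓ₀⟩ : 𝒜.Nonempty := Finset.card_pos.mp (by omega)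
  set Λ' := Λ ⊔ 𝒜.sup id
  set G' := insert Λ' (G \ 𝒜)
  have h𝒜Λ' : ∀ Γ ∈ 𝒜, Γ ≤ Λ' := fun Γ hΓ => le_sup_of_le_right (Finset.le_sup (f := id) hΓ)
  have hΛ' : adim Λ' ≤ ∑ Γ ∈ 𝒜, adim Γ := by
    have hjoin : adim Λ' ≤ adim Λ + ∑ Γ ∈ 𝒜, (adim Γ - adim (Γ ⊓ Λ)) :=
      adim_sup_finset_sup_le Λ 𝒜
    rw [Finset.sum_sub_distrib] at hjoin
    omega
  have hΛ'1 : 1 ≤ adim Λ' := (hG1 Γ₀ (h𝒜 hΓ₀)).trans (adim_mono (h𝒜Λ' Γ₀ hΓ₀))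
  have hG'1 : ∀ Γ ∈ G', 1 ≤ adim Γ := by
    simp only [G', Finset.forall_mem_insert, Finset.mem_sdiff]
    exact ⟨hΛ'1, fun Γ hΓ => hG1 Γ hΓ.1⟩
  have hG'sum : ∑ Γ ∈ G', adim Γ ≤ k := by
    linarith [Finset.sum_insert_sdiff_le h𝒜 (f := adim) (a := Λ') (by omega)]
  have hcover : P.filter (fun p => ∃ Γ ∈ G, p ∈ Γ) ⊆ P.filter (fun p => ∃ Γ ∈ G', p ∈ Γ) := by
    refine Finset.monotone_filter_right _ fun p _ ⟨Γ, hΓG, hpΓ⟩ => ?_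
    by_cases hΓ : Γ ∈ 𝒜
    · exact ⟨Λ', Finset.mem_insert_self _ _, h𝒜Λ' Γ hΓ hpΓ⟩
    · exact ⟨Γ, Finset.mem_insert_of_mem (Finset.mem_sdiff.mpr ⟨hΓG, hΓ⟩), hpΓ⟩
  have hG'cov : (P.filter (fun p => ∃ Γ ∈ G', p ∈ Γ)).card = gdim K P k :=
    le_antisymm (card_le_gdim (Finset.filter_subset _ _)
        ⟨G', hG'1, fun q hq => (Finset.mem_filter.mp hq).2, hG'sum⟩)
      (hGcov ▸ Finset.card_le_card hcover)
  have hG'card : G'.card ≤ G.card - 𝒜.card + 1 :=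
    (Finset.card_insert_le _ _).trans (by rw [Finset.card_sdiff_of_subset h𝒜])
  have := hGmin G' hG'1 hG'sum hG'cov
  have := Finset.card_le_card h𝒜
  omega
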